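/- For F = {1,2}, the exceptional Hermite polynomials H_n^F satisfy for all n ≥ 0 the nine-term recurrence 2n(n-1)(n-2)(n-3) H_{n-4}^F(x) + 4n(n-1)(n-2) H_{n-2}^F(x) + n(3n-7) H_n^F(x) + [(n-1)(n-2)/(n+1)] H_{n+2}^F(x) + [(n-1)(n-2)/(8(n+2)(n+3))] H_{n+4}^F(x) = (2x^4 + 2x^2 - 1/2) H_n^F(x). -/

import Mathlib

open Polynomial

/-- The (physicists') Hermite polynomial `H_n`. -/
noncomputable def hermiteP (n : ℕ) : Polynomial ℝ :=
  (n.factorial : ℝ) •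
    ∑ j ∈ Finset.range (n / 2 + 1),
      ((-1 : ℝ) ^ j / ((j.factorial : ℝ) * ((n - 2 * j).factorial : ℝ))) •
        (C (2 : ℝ) * X) ^ (n - 2 * j)

/-- Hermite polynomial with integer index; zero for negative index. -/
noncomputable def hermiteZ (m : ℤ) : Polynomial ℝ :=
  if m < 0 then 0 else hermiteP m.toNat

/-- The exceptional Hermite polynomial `H_n^F` for `F = {1,2}` (so `u_F = 0`), evaluated
at `x`: a `3×3` Wronskian determinant. -/
noncomputable def excH12 (m : ℤ) (x : ℝ) : ℝ :=
  Matrix.det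
    !![(hermiteZ m).eval x, (derivative (hermiteZ m)).eval x,
         (derivative (derivative (hermiteZ m))).eval x;
       (hermiteP 1).eval x, (derivative (hermiteP 1)).eval x,
         (derivative (derivative (hermiteP 1))).eval x;
       (hermiteP 2).eval x, (derivative (hermiteP 2)).eval x,
         (derivative (derivative (hermiteP 2))).eval x]


/-!
From the explicit sum, `H_{n+1}' = 2(n+1) H_n`; the raising relation `H_{n+1} = 2x H_n - H_n'`
follows by induction, since both sides have the same derivative and agree at `0`. Together they
give Hermite's equation `H_n'' = 2x H_n' - 2n H_n`, hence
`H_n^{(k+2)} = 2x H_n^{(k+1)} - 2(n-k) H_n^{(k)}` for all `k`.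

Expanding the determinant, `H_m^F = 16 H_m - 16x H_m' + (8x^2+4) H_m''`. Since
`H_n^{(k)} = 2^k n(n-1)⋯(n-k+1) H_{n-k}`, the terms `H_{n-4}^F` and `H_{n-2}^F`, weighted by the
falling factorials in their coefficients, are the same combination of `H_n^{(k)}, …, H_n^{(k+2)}`
(the weight vanishes exactly when `n - k < 0`, so small `n` need no separate treatment), while `H_{n+2}^F` and `H_{n+4}^F` are expressed
through `H_n` and `H_{n+1}` by the three-term recurrence. Hermite's equation then reduces every
term to `H_n(x)` and `H_n'(x)`, and the recurrence becomes an identity of rational functions.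
-/

theorem derivative_div_factorial_smul_C_two_mul_X_pow_succ (c : ℝ) (k : ℕ) :
    derivative ((c / (k + 1).factorial) • (C 2 * X) ^ (k + 1) : ℝ[X])
      = (2 : ℝ) • ((c / k.factorial) • (C 2 * X) ^ k) := by
  rw [derivative_smul, derivative_pow, derivative_C_mul_X, Nat.add_sub_cancel, smul_smul,
    smul_eq_C_mul, smul_eq_C_mul, Nat.factorial_succ]
  rw [show C (c / ((k + 1) * k.factorial : ℕ)) * (C ((k + 1 : ℕ) : ℝ) * (C 2 * X) ^ k * C 2)
      = C (c / ((k + 1) * k.factorial : ℕ) * (k + 1 : ℕ) * 2) * (C 2 * X : ℝ[X]) ^ k by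
    simp only [C_mul]; ring]
  congr 2
  push_cast
  field_simp

theorem derivative_hermiteP_succ (n : ℕ) :
    derivative (hermiteP (n + 1)) = C (2 * ((n : ℝ) + 1)) * hermiteP n := by
  have hsummand : ∀ j ∈ Finset.range (n / 2 + 1),
      derivative (((-1 : ℝ) ^ j / ((j.factorial : ℝ) * ((n + 1 - 2 * j).factorial : ℝ))) •
        (C (2 : ℝ) * X) ^ (n + 1 - 2 * j))
      = (2 : ℝ) • (((-1 : ℝ) ^ j / ((j.factorial : ℝ) * ((n - 2 * j).factorial : ℝ))) •
        (C (2 : ℝ) * X) ^ (n - 2 * j)) := by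
    intro j hj
    have hk : n + 1 - 2 * j = n - 2 * j + 1 := by
      simp only [Finset.mem_range] at hj; omega
    rw [hk, ← div_div, ← div_div]
    exact derivative_div_factorial_smul_C_two_mul_X_pow_succ _ _
  have hconst : ∀ j ∈ Finset.range ((n + 1) / 2 + 1), j ∉ Finset.range (n / 2 + 1) →
      derivative (((-1 : ℝ) ^ j / ((j.factorial : ℝ) * ((n + 1 - 2 * j).factorial : ℝ))) •
        (C (2 : ℝ) * X) ^ (n + 1 - 2 * j)) = 0 := by
    intro j hj hj'
    simp only [Finset.mem_range] at hj hj'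
    rw [show n + 1 - 2 * j = 0 by omega]
    simp
  have hrange : Finset.range (n / 2 + 1) ⊆ Finset.range ((n + 1) / 2 + 1) :=
    Finset.range_subset_range.mpr (by omega)
  unfold hermiteP
  rw [derivative_smul, derivative_sum, ← Finset.sum_subset hrange hconst,
    Finset.sum_congr rfl hsummand, ← Finset.smul_sum, smul_smul, smul_eq_C_mul, smul_eq_C_mul,
    ← mul_assoc, ← C_mul, Nat.factorial_succ]
  push_cast
  ring_nf

theorem hermiteP_eval_zero_of_odd {n : ℕ} (hn : Odd n) : (hermiteP n).eval 0 = 0 := by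
  unfold hermiteP
  rw [eval_smul, eval_finsetSum, Finset.sum_eq_zero, smul_zero]
  intro j hj
  have : n - 2 * j ≠ 0 := by
    obtain ⟨u, rfl⟩ := hn
    simp only [Finset.mem_range] at hj; omega
  simp [this]

theorem hermiteP_eval_zero_two_mul (u : ℕ) :
    (hermiteP (2 * u)).eval 0 = (2 * u).factorial * ((-1 : ℝ) ^ u / u.factorial) := by
  unfold hermiteP
  rw [eval_smul, eval_finsetSum, show 2 * u / 2 = u by omega,
    Finset.sum_eq_single_of_mem u (Finset.self_mem_range_succ u)]
  · simp
  · intro j hj hju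
    have : 2 * u - 2 * j ≠ 0 := by
      simp only [Finset.mem_range] at hj; omega
    simp [this]

theorem hermiteP_add_two_eval_zero (n : ℕ) :
    (hermiteP (n + 2)).eval 0 = -(2 * ((n : ℝ) + 1)) * (hermiteP n).eval 0 := by
  rcases Nat.even_or_odd' n with ⟨u, rfl | rfl⟩
  · rw [show 2 * u + 2 = 2 * (u + 1) by ring, hermiteP_eval_zero_two_mul,
      hermiteP_eval_zero_two_mul, show 2 * (u + 1) = 2 * u + 1 + 1 by ring,
      Nat.factorial_succ, Nat.factorial_succ, Nat.factorial_succ]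
    push_cast
    field_simp
    ring
  · rw [hermiteP_eval_zero_of_odd (by use u + 1; ring), hermiteP_eval_zero_of_odd (by use u),
      mul_zero]

theorem hermiteP_zero : hermiteP 0 = 1 := by
  simp [hermiteP]

theorem hermiteP_succ (n : ℕ) :
    hermiteP (n + 1) = C 2 * X * hermiteP n - derivative (hermiteP n) := by
  induction n with
  | zero => simp [hermiteP]
  | succ n ih =>
    set R := hermiteP (n + 2) - (C 2 * X * hermiteP (n + 1) - derivative (hermiteP (n + 1)))
    have hR : derivative R = 0 := by
      have : derivative R = C (2 * ((n : ℝ) + 1)) *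
          (hermiteP (n + 1) - (C 2 * X * hermiteP n - derivative (hermiteP n))) := by
        simp only [R, derivative_sub, derivative_mul, derivative_C, derivative_X,
          derivative_hermiteP_succ]
        push_cast
        simp only [C_add, C_mul, C_1, C_ofNat]
        ring
      rw [this, ih, sub_self, mul_zero]
    have hR0 : R.eval 0 = 0 := by
      simp only [R, eval_sub, eval_mul, eval_C, eval_X, derivative_hermiteP_succ,
        hermiteP_add_two_eval_zero]
      ring
    refine sub_eq_zero.mp (?_ : R = 0)
    rw [eq_C_of_derivative_eq_zero hR, coeff_zero_eq_eval_zero, hR0, C_0]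

theorem derivative_derivative_hermiteP (n : ℕ) :
    derivative (derivative (hermiteP n))
      = C 2 * X * derivative (hermiteP n) - C (2 * (n : ℝ)) * hermiteP n := by
  have h := congrArg derivative (hermiteP_succ n)
  simp only [derivative_hermiteP_succ, derivative_sub, derivative_mul, derivative_C,
    derivative_X] at h
  simp only [C_mul, C_add, C_1, C_ofNat] at h ⊢
  linear_combination h

theorem iterate_derivative_add_two_of_hermite_ode {R : Type*} [CommRing R] {p : R[X]} {a : R}
    (hp : derivative (derivative p) = C 2 * X * derivative p - C (2 * a) * p) (k : ℕ) :
    derivative^[k + 2] p = C 2 * X * derivative^[k + 1] p - C (2 * (a - k)) * derivative^[k] p := by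
  induction k with
  | zero => simpa using hp
  | succ k ih =>
    have h := congrArg derivative ih
    simp only [Function.iterate_succ_apply', derivative_sub, derivative_mul, derivative_C,
      derivative_X] at h ⊢
    simp only [C_mul, C_sub, C_add, C_1, C_ofNat, Nat.cast_succ] at h ⊢
    linear_combination h

theorem hermiteZ_natCast (n : ℕ) : hermiteZ n = hermiteP n := by
  simp [hermiteZ]

theorem hermiteZ_of_neg {m : ℤ} (hm : m < 0) : hermiteZ m = 0 := by
  simp [hermiteZ, hm]

theorem derivative_hermiteZ_add_one (m : ℤ) :
    derivative (hermiteZ (m + 1)) = C (2 * ((m : ℝ) + 1)) * hermiteZ m := by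
  rcases lt_trichotomy m (-1) with hm | rfl | hm
  · simp [hermiteZ_of_neg (show m < 0 by omega), hermiteZ_of_neg (show m + 1 < 0 by omega)]
  · simp [hermiteZ, hermiteP_zero]
  · lift m to ℕ using (by omega)
    exact_mod_cast derivative_hermiteP_succ m

theorem iterate_derivative_hermiteZ (k : ℕ) (m : ℤ) :
    derivative^[k] (hermiteZ m)
      = C (2 ^ k * ∏ i ∈ Finset.range k, ((m : ℝ) - i)) * hermiteZ (m - k) := by
  induction k with
  | zero => simp
  | succ k ih =>
    have h := derivative_hermiteZ_add_one (m - (k + 1))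
    rw [show m - (k + 1) + 1 = m - k by ring] at h
    rw [Function.iterate_succ_apply', ih, derivative_C_mul, h, ← mul_assoc, ← C_mul,
      Finset.prod_range_succ]
    push_cast
    ring_nf

theorem excH12_eq (m : ℤ) (x : ℝ) :
    excH12 m x = 16 * (hermiteZ m).eval x - 16 * x * (derivative (hermiteZ m)).eval x
      + (8 * x ^ 2 + 4) * (derivative (derivative (hermiteZ m))).eval x := by
  have h1 : hermiteP 1 = C 2 * X := by simp [hermiteP_succ 0, hermiteP_zero]
  have h2 : hermiteP 2 = C 4 * X ^ 2 - C 2 := by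
    rw [hermiteP_succ 1, h1, derivative_C_mul_X, show (4 : ℝ) = 2 * 2 by norm_num, C_mul]
    ring
  simp [excH12, Matrix.det_fin_three, h1, h2]
  ring

theorem excH12_natCast_sub_mul (k n : ℕ) (x : ℝ) :
    2 ^ k * (∏ i ∈ Finset.range k, ((n : ℝ) - i)) * excH12 (n - k) x
      = 16 * (derivative^[k] (hermiteP n)).eval x
        - 16 * x * (derivative^[k + 1] (hermiteP n)).eval x
        + (8 * x ^ 2 + 4) * (derivative^[k + 2] (hermiteP n)).eval x := by
  simp only [Function.iterate_succ_apply', ← hermiteZ_natCast, iterate_derivative_hermiteZ,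
    excH12_eq, derivative_C_mul, eval_mul, eval_C, Int.cast_natCast]
  ring

theorem hermiteP_add_two (n : ℕ) :
    hermiteP (n + 2) = C 2 * X * hermiteP (n + 1) - C (2 * ((n : ℝ) + 1)) * hermiteP n := by
  rw [hermiteP_succ (n + 1), derivative_hermiteP_succ]

theorem excH12_natCast_add_two (n : ℕ) (x : ℝ) :
    excH12 (n + 2) x = 4 * ((n : ℝ) + 1) * (((n + 2) * (8 * x ^ 2 + 4) - 8) * (hermiteP n).eval x
      - 8 * x * (hermiteP (n + 1)).eval x) := by
  rw [show (n : ℤ) + 2 = (n + 2 : ℕ) by push_cast; ring, excH12_eq, hermiteZ_natCast,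
    derivative_hermiteP_succ (n + 1), derivative_C_mul, derivative_hermiteP_succ, hermiteP_add_two]
  simp only [eval_sub, eval_mul, eval_C, eval_X]
  push_cast
  ring

theorem excHermite_nine_term_recurrence (n : ℕ) (x : ℝ) :
    2 * (n : ℝ) * ((n : ℝ) - 1) * ((n : ℝ) - 2) * ((n : ℝ) - 3) * excH12 ((n : ℤ) - 4) x
      + 4 * (n : ℝ) * ((n : ℝ) - 1) * ((n : ℝ) - 2) * excH12 ((n : ℤ) - 2) x
      + (n : ℝ) * (3 * (n : ℝ) - 7) * excH12 (n : ℤ) x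
      + ((n : ℝ) - 1) * ((n : ℝ) - 2) / ((n : ℝ) + 1) * excH12 ((n : ℤ) + 2) x
      + ((n : ℝ) - 1) * ((n : ℝ) - 2) / (8 * ((n : ℝ) + 2) * ((n : ℝ) + 3))
          * excH12 ((n : ℤ) + 4) x
    = (2 * x ^ 4 + 2 * x ^ 2 - 1 / 2) * excH12 (n : ℤ) x := by
  have ode (k : ℕ) := congrArg (eval x)
    (iterate_derivative_add_two_of_hermite_ode (derivative_derivative_hermiteP n) k)
  have hn := excH12_natCast_sub_mul 0 n x
  have hn_sub_two := excH12_natCast_sub_mul 2 n x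
  have hn_sub_four := excH12_natCast_sub_mul 4 n x
  have hn_add_four := excH12_natCast_add_two (n + 2) x
  rw [show ((n + 2 : ℕ) : ℤ) + 2 = n + 4 by push_cast; ring] at hn_add_four
  simp only [Finset.prod_range_succ, Finset.prod_range_zero, Nat.cast_zero, sub_zero, pow_zero,
    one_mul, Function.iterate_zero, id] at hn hn_sub_two hn_sub_four
  rw [hn, excH12_natCast_add_two, hn_add_four]
  linear_combination (norm := skip) hn_sub_four / 8 + ((n : ℝ) - 2) * hn_sub_two
  simp only [eval_sub, eval_mul, eval_C, eval_X] at ode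
  simp only [ode, hermiteP_add_two, hermiteP_succ n, eval_sub, eval_mul, eval_C, eval_X]
  simp only [Function.iterate_succ_apply', Function.iterate_zero, id]
  push_cast
  field_simp
  ring
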